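/- The cofactor vector φ is an eigenvector on the spectral curve: if y ≠ 0 and det(x·𝟙 + L) = 0 (equivalently, (x,y) lies on the spectral curve f̃(x,y) = y·det(x·𝟙 + L) = 0), then (x·𝟙 + L)·φ(x,y) = 0; i.e., φ(x,y) is an eigenvector of L with eigenvalue −x. -/

import Mathlib

/-! Let `A = x·𝟙 + L` and let `e` be the last standard basis vector. Up to a global sign, `φ` is
the last column of `adj A`, i.e. the Cramer solution of `A v = e`: `φ_{g+1}` is the cofactor of
the corner entry, and `φ_i` is the cofactor of the entry `(g+1, i)` once the moved column is cycled
back to position `i`, a cycle of sign `(-1)^(g-i)`. Hence `A φ = -(det A) e`, which vanishes on the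
spectral curve. -/

/-- The Lax matrix `L(I;V)` of the periodic discrete Toda lattice (0-indexed:
row/column `i : Fin (g+1)` corresponds to the 1-indexed `i+1`).  Its entries are
`L_{ii} = I_{i+1} + V_i` (cyclically, so the last diagonal entry is
`I_1 + V_{g+1}`), `L_{i,i+1} = 1`, `L_{i+1,i} = I_{i+1} V_{i+1}`,
`L_{1,g+1} = (-1)^g I_1 V_1 / y`, `L_{g+1,1} = (-1)^g y`,
all other entries `0`. -/
noncomputable def todaLax (g : ℕ) (I V : Fin (g + 1) → ℂ) (y : ℂ) :
    Matrix (Fin (g + 1)) (Fin (g + 1)) ℂ :=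
  Matrix.of fun i j =>
    (if j = i then I (i + 1) + V i else 0)
    + (if (i : ℕ) + 1 = (j : ℕ) then 1 else 0)
    + (if (j : ℕ) + 1 = (i : ℕ) then I i * V i else 0)
    + (if (i : ℕ) = 0 ∧ (j : ℕ) = g then (-1) ^ g * I 0 * V 0 / y else 0)
    + (if (i : ℕ) = g ∧ (j : ℕ) = 0 then (-1) ^ g * y else 0)

/-- `A = x·𝟙_{g+1} + L`. -/
noncomputable def todaA (g : ℕ) (I V : Fin (g + 1) → ℂ) (x y : ℂ) :
    Matrix (Fin (g + 1)) (Fin (g + 1)) ℂ :=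
  x • (1 : Matrix (Fin (g + 1)) (Fin (g + 1)) ℂ) + todaLax g I V y

/-- For `i = 1, …, g` (here `i : Fin g`), `φ_i(x,y)` is the determinant of the
`g × g` matrix obtained from the first `g` rows of `A` by replacing its `i`-th
column with the `(g+1)`-th column of `A`, all other columns unchanged and in
place. -/
noncomputable def todaPhi (g : ℕ) (I V : Fin (g + 1) → ℂ) (x y : ℂ) (i : Fin g) : ℂ :=
  (Matrix.of fun r c : Fin g =>
    if c = i then todaA g I V x y r.castSucc (Fin.last g)
    else todaA g I V x y r.castSucc c.castSucc).det

/-- `φ_{g+1}(x) = det(x·𝟙_g + L_Λ̄)`, where `L_Λ̄` is the top-left `g × g`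
block of `L`. -/
noncomputable def todaPhiLast (g : ℕ) (I V : Fin (g + 1) → ℂ) (x y : ℂ) : ℂ :=
  (x • (1 : Matrix (Fin g) (Fin g) ℂ) +
    (todaLax g I V y).submatrix Fin.castSucc Fin.castSucc).det

open Matrix

lemma Fin.succAbove_castSucc_eq_cycleIcc {m : ℕ} (j k : Fin (m + 1)) :
    (Fin.castSucc j).succAbove k =
      if Fin.cycleIcc j (Fin.last m) k = j then Fin.last (m + 1)
      else Fin.castSucc (Fin.cycleIcc j (Fin.last m) k) := by
  rcases lt_or_ge k j with hkj | hjk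
  · rw [Fin.cycleIcc_of_lt hkj, if_neg hkj.ne,
      Fin.succAbove_of_castSucc_lt _ _ (Fin.castSucc_lt_castSucc_iff.mpr hkj)]
  rw [Fin.succAbove_of_le_castSucc _ _ (Fin.castSucc_le_castSucc_iff.mpr hjk)]
  rcases eq_or_ne k (Fin.last m) with rfl | hk
  · rw [Fin.cycleIcc_of_last hjk, if_pos rfl, Fin.succ_last]
  have hk' : ((k + 1 : Fin (m + 1)) : ℕ) = k + 1 :=
    Fin.val_add_one_of_lt (Fin.lt_last_iff_ne_last.mpr hk)
  rw [Fin.cycleIcc_of_ge_of_lt hjk (Fin.lt_last_iff_ne_last.mpr hk), if_neg]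
  · ext
    simp [hk']
  · intro h
    have := congrArg Fin.val h
    have := Fin.le_def.mp hjk
    omega

namespace Matrix

variable {R : Type*} [CommRing R]

lemma cramer_single_last_apply {n : ℕ} (A : Matrix (Fin (n + 1)) (Fin (n + 1)) R)
    (j : Fin (n + 1)) :
    cramer A (Pi.single (Fin.last n) 1) j
      = (-1) ^ (n + (j : ℕ)) * (A.submatrix Fin.castSucc j.succAbove).det := by
  rw [cramer_eq_adjugate_mulVec, mulVec_single_one, col_apply,
    adjugate_fin_succ_eq_det_submatrix, Fin.succAbove_last, Fin.val_last]

lemma det_replaceCol_last {m : ℕ} (A : Matrix (Fin (m + 2)) (Fin (m + 2)) R)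
    (j : Fin (m + 1)) :
    (of fun r c : Fin (m + 1) =>
        if c = j then A r.castSucc (Fin.last (m + 1)) else A r.castSucc c.castSucc).det
      = (-1) ^ (m - (j : ℕ)) * (A.submatrix Fin.castSucc (Fin.castSucc j).succAbove).det := by
  have hperm : (of fun r c : Fin (m + 1) =>
        if c = j then A r.castSucc (Fin.last (m + 1)) else A r.castSucc c.castSucc)
      = (A.submatrix Fin.castSucc (Fin.castSucc j).succAbove).submatrix id
          (Fin.cycleIcc j (Fin.last m)).symm := by
    ext r c
    simp only [of_apply, submatrix_apply, id_eq, Fin.succAbove_castSucc_eq_cycleIcc,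
      Equiv.apply_symm_apply]
    split_ifs <;> rfl
  rw [hperm, det_permute', Equiv.Perm.sign_symm, Fin.sign_cycleIcc_of_le (Fin.le_last j),
    Fin.val_last]
  push_cast
  rfl

theorem neg_cramer_single_last {n : ℕ} (A : Matrix (Fin (n + 1)) (Fin (n + 1)) R) :
    -cramer A (Pi.single (Fin.last n) 1) = fun j : Fin (n + 1) =>
      if h : (j : ℕ) < n then
        (of fun r c : Fin n =>
          if c = ⟨j, h⟩ then A r.castSucc (Fin.last n) else A r.castSucc c.castSucc).det
      else -(A.submatrix Fin.castSucc Fin.castSucc).det := by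
  funext j
  induction j using Fin.lastCases with
  | last =>
    rw [Pi.neg_apply, cramer_single_last_apply, Fin.succAbove_last, Fin.val_last, ← two_mul,
      pow_mul, neg_one_sq, one_pow, one_mul, dif_neg (lt_irrefl n)]
  | cast j =>
    obtain ⟨m, rfl⟩ := Nat.exists_eq_add_one_of_ne_zero j.pos.ne'
    rw [Pi.neg_apply, cramer_single_last_apply, Fin.val_castSucc, dif_pos j.is_lt, Fin.eta,
      det_replaceCol_last]
    have hexp : m + 1 + (j : ℕ) = (m - j) + 2 * j + 1 := by omega
    rw [hexp, pow_succ, pow_add, pow_mul]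
    ring

end Matrix

lemma todaA_submatrix_castSucc (g : ℕ) (I V : Fin (g + 1) → ℂ) (x y : ℂ) :
    (todaA g I V x y).submatrix Fin.castSucc Fin.castSucc
      = x • (1 : Matrix (Fin g) (Fin g) ℂ)
        + (todaLax g I V y).submatrix Fin.castSucc Fin.castSucc := by
  simp only [todaA, submatrix_add, submatrix_smul, Pi.add_apply, Pi.smul_apply,
    submatrix_one _ (Fin.castSucc_injective g)]

theorem todaPhi_eigenvector_general (g : ℕ) (I V : Fin (g + 1) → ℂ)
    (x y : ℂ) (hdet : (todaA g I V x y).det = 0) :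
    (todaA g I V x y).mulVec
        (fun j : Fin (g + 1) =>
          if h : (j : ℕ) < g then todaPhi g I V x y ⟨j, h⟩
          else -todaPhiLast g I V x y) = 0 := by
  have hφ : (fun j : Fin (g + 1) =>
        if h : (j : ℕ) < g then todaPhi g I V x y ⟨j, h⟩ else -todaPhiLast g I V x y)
      = -cramer (todaA g I V x y) (Pi.single (Fin.last g) 1) := by
    rw [neg_cramer_single_last, todaA_submatrix_castSucc]
    rfl
  rw [hφ, mulVec_neg, mulVec_cramer, hdet, zero_smul, neg_zero]

/-- On the spectral curve (`y ≠ 0` and `det(x·𝟙 + L) = 0`), the cofactor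
vector `φ = (φ_1, …, φ_g, -φ_{g+1})ᵀ` satisfies `(x·𝟙 + L)·φ(x,y) = 0`, i.e.
`φ(x,y)` is an eigenvector of `L` with eigenvalue `-x`. -/
theorem todaPhi_eigenvector (g : ℕ) (hg : 1 ≤ g) (I V : Fin (g + 1) → ℂ)
    (x y : ℂ) (hy : y ≠ 0) (hdet : (todaA g I V x y).det = 0) :
    (todaA g I V x y).mulVec
        (fun j : Fin (g + 1) =>
          if h : (j : ℕ) < g then todaPhi g I V x y ⟨j, h⟩
          else -todaPhiLast g I V x y) = 0 :=
  todaPhi_eigenvector_general g I V x y hdet
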